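/- For every m ≥ 1, the first three occurrences of E_{m,1} in the doubling sequence D∞ start at positions L(E_{m,1},1) = 1, L(E_{m,1},2) = 2^m+1, and L(E_{m,1},3) = 3·2^{m−1}+1. In particular the gap between the first and second occurrence is the single letter δ_m, and the second and third occurrences overlap in 2^{m−1} − 1 letters. -/

import Mathlib

namespace PD

/-- The period-doubling substitution on the alphabet `Bool`,
where `false` stands for the letter `a` and `true` for the letter `b`:
`σ(a) = ab`, `σ(b) = aa`. -/
def sub : Bool → List Bool
  | false => [false, true]
  | true  => [false, false]

/-- The substitution applied to a finite word. -/
def subW (w : List Bool) : List Bool := w.flatMap sub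

/-- `A m = σ^m(a)`. -/
def A (m : ℕ) : List Bool := subW^[m] [false]

/-- `B m = σ^m(b)`. -/
def B (m : ℕ) : List Bool := subW^[m] [true]

/-- The doubling sequence `D∞` (0-indexed: `D n` is the `(n+1)`-th letter),
the fixed point of `σ` beginning with `a`; `A m` is a prefix of `A (m+1)`,
and `A (n+1)` has length `2^(n+1) > n`. -/
def D (n : ℕ) : Bool := (A (n + 1)).getD n false

/-- `δ m`, the last letter of `A m`. -/
def delta (m : ℕ) : Bool := (A m).getLastD false

/-- The envelope words (`i ∈ {1,2}`): `E m 1 = A m` minus its last letter,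
`E m 2 = A (m-1) ++ (A m` minus its last letter `)`. -/
def E (m i : ℕ) : List Bool :=
  if i = 1 then (A m).dropLast else A (m - 1) ++ (A m).dropLast

/-- `w` occurs at the (1-indexed) position `j` in the finite word `τ`. -/
def OccursIn (w τ : List Bool) (j : ℕ) : Prop :=
  1 ≤ j ∧ (τ.drop (j - 1)).take w.length = w

/-- `w` occurs at the (1-indexed) position `j` in the doubling sequence. -/
def OccursD (w : List Bool) (j : ℕ) : Prop :=
  1 ≤ j ∧ ∀ k < w.length, D (j - 1 + k) = w.getD k false

/-- `w` is a factor of the doubling sequence. -/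
def FactorD (w : List Bool) : Prop := ∃ j, OccursD w j

/-- `L w p`: the (1-indexed) starting position of the `p`-th occurrence of `w`
in the doubling sequence, occurrences being ordered by starting position.
(Each factor occurs infinitely often, so `Nat.nth` enumerates all occurrences
in increasing order.) -/
noncomputable def L (w : List Bool) (p : ℕ) : ℕ := Nat.nth (OccursD w) (p - 1)

/-- The strict total order on envelope words:
`E m₁ i₁ ⊏ E m₂ i₂` iff `m₁ < m₂`, or `m₁ = m₂` and `i₁ < i₂`. -/
def EnvLt (m₁ i₁ m₂ i₂ : ℕ) : Prop := m₁ < m₂ ∨ (m₁ = m₂ ∧ i₁ < i₂)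

/-- `Env(w) = E m i`: the envelope word `E m i` is the `⊏`-minimal envelope
word containing `w` as a factor. -/
def IsEnv (w : List Bool) (m i : ℕ) : Prop :=
  1 ≤ m ∧ (i = 1 ∨ i = 2) ∧ w <:+: E m i ∧
    ∀ m' i', 1 ≤ m' → (i' = 1 ∨ i' = 2) → EnvLt m' i' m i → ¬ w <:+: E m' i'

/-- The substitution `φ₁(a) = a`, `φ₁(b) = bb`. -/
def phi1 : Bool → List Bool
  | false => [false]
  | true  => [true, true]

/-- `Θ₁ = φ₁(D∞)` (0-indexed): `φ₁(A (n+1))` is a prefix of `Θ₁` of length `> n`. -/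
def Theta1 (n : ℕ) : Bool := ((A (n + 1)).flatMap phi1).getD n false

/-- The substitution `φ₂(a) = ab`, `φ₂(b) = acac`, over the alphabet `Fin 3`
where `0` stands for `a`, `1` for `b` and `2` for `c`. -/
def phi2 : Bool → List (Fin 3)
  | false => [0, 1]
  | true  => [0, 2, 0, 2]

/-- `Θ₂ = φ₂(D∞)` (0-indexed). -/
def Theta2 (n : ℕ) : Fin 3 := ((A (n + 1)).flatMap phi2).getD n 0

/-- `N₁(x,p)`: the number of letters `x` among the first `p` letters of `Θ₁`. -/
def N1 (x : Bool) (p : ℕ) : ℕ := ((List.range p).map Theta1).count x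

/-- `N₂(x,p)`: the number of letters `x` among the first `p` letters of `Θ₂`. -/
def N2 (x : Fin 3) (p : ℕ) : ℕ := ((List.range p).map Theta2).count x

end PD

/-! The letters of `D∞` satisfy `D(2n) = a` and `D(2n+1) = ¬D(n)`, and `E m 1` is the prefix of
`D∞` of length `2^m - 1`. Hence this prefix never occurs at an odd position (its second letter is
`b`), and it occurs at the even position `2s` iff the prefix of length `2^(m-1) - 1` occurs at `s`.
By induction the occurrences start exactly at `2^(m-1) q + 1` with `D q = a`, and the first three
`a`'s of `D∞ = abaaabab⋯` sit at `q = 0, 2, 3`. -/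

namespace PD

lemma subW_cons (x : Bool) (w : List Bool) : subW (x :: w) = sub x ++ subW w := rfl

lemma length_subW (w : List Bool) : (subW w).length = 2 * w.length := by
  induction w with
  | nil => rfl
  | cons x w ih => cases x <;> simp [subW_cons, sub, ih] <;> ring

lemma subW_append (u v : List Bool) : subW (u ++ v) = subW u ++ subW v :=
  List.flatMap_append

lemma A_succ (m : ℕ) : A (m + 1) = subW (A m) :=
  Function.iterate_succ_apply' subW m [false]

lemma length_A (m : ℕ) : (A m).length = 2 ^ m := by
  induction m with
  | zero => rfl
  | succ m ih => rw [A_succ, length_subW, ih, pow_succ, mul_comm]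

lemma subW_getD_two_mul {w : List Bool} {j : ℕ} (hj : j < w.length) :
    (subW w).getD (2 * j) false = false := by
  induction w generalizing j with
  | nil => simp at hj
  | cons x w ih =>
    cases j with
    | zero => cases x <;> rfl
    | succ j =>
      have h := ih (j := j) (by simpa using hj)
      cases x <;> simpa [subW_cons, sub, Nat.mul_succ] using h

lemma subW_getD_two_mul_add_one {w : List Bool} {j : ℕ} (hj : j < w.length) :
    (subW w).getD (2 * j + 1) false = !(w.getD j false) := by
  induction w generalizing j with
  | nil => simp at hj
  | cons x w ih =>
    cases j with
    | zero => cases x <;> rfl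
    | succ j =>
      have h := ih (j := j) (by simpa using hj)
      rw [show 2 * (j + 1) + 1 = 2 * j + 1 + 2 by ring]
      cases x <;> simpa [subW_cons, sub] using h

lemma A_prefix_A_succ (m : ℕ) : A m <+: A (m + 1) := by
  induction m with
  | zero => exact ⟨[true], rfl⟩
  | succ m ih =>
    obtain ⟨t, ht⟩ := ih
    exact ⟨subW t, by rw [A_succ (m + 1), ← ht, subW_append, ← A_succ, ht]⟩

lemma A_prefix_of_le {m k : ℕ} (h : m ≤ k) : A m <+: A k := by
  induction k, h using Nat.le_induction with
  | base => exact List.prefix_refl _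
  | succ k _ ih => exact ih.trans (A_prefix_A_succ k)

lemma getD_of_prefix {l l' : List Bool} (h : l <+: l') {n : ℕ} (hn : n < l.length) :
    l'.getD n false = l.getD n false := by
  obtain ⟨t, rfl⟩ := h
  exact List.getD_append _ _ _ _ hn

lemma D_eq_getD_A {k n : ℕ} (h : n < 2 ^ k) : D n = (A k).getD n false := by
  have hn : n < 2 ^ (n + 1) := Nat.lt_two_pow_self.trans (Nat.pow_lt_pow_succ one_lt_two)
  rcases Nat.le_total k (n + 1) with hk | hk
  · exact getD_of_prefix (A_prefix_of_le hk) (by rwa [length_A])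
  · exact (getD_of_prefix (A_prefix_of_le hk) (by rwa [length_A])).symm

lemma D_two_mul (n : ℕ) : D (2 * n) = false := by
  have hn : n < 2 ^ n := Nat.lt_two_pow_self
  rw [D_eq_getD_A (k := n + 1) (by rw [pow_succ]; omega), A_succ]
  exact subW_getD_two_mul (by rwa [length_A])

lemma D_two_mul_add_one (n : ℕ) : D (2 * n + 1) = !D n := by
  have hn : n < 2 ^ n := Nat.lt_two_pow_self
  rw [D_eq_getD_A (k := n + 1) (by rw [pow_succ]; omega), A_succ,
    subW_getD_two_mul_add_one (by rwa [length_A]), D_eq_getD_A hn]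

lemma length_E_one (m : ℕ) : (E m 1).length = 2 ^ m - 1 := by
  rw [E, if_pos rfl, List.length_dropLast, length_A]

lemma getD_E_one {m k : ℕ} (hk : k < 2 ^ m - 1) : (E m 1).getD k false = D k := by
  rw [D_eq_getD_A (k := m) (by omega), E, if_pos rfl, List.getD_eq_getElem?_getD,
    List.getD_eq_getElem?_getD, List.getElem?_dropLast, length_A, if_pos hk]

lemma D_two_pow_sub_one (m : ℕ) : D (2 ^ m - 1) = delta m := by
  have hpos : 0 < 2 ^ m := Nat.two_pow_pos m
  rw [D_eq_getD_A (k := m) (by omega), delta, List.getLastD_eq_getLast?,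
    List.getLast?_eq_getElem?, List.getD_eq_getElem?_getD, length_A]

/-- `t` is 0-indexed, unlike the position in `OccursD`. -/
def PrefixOccursAt (n t : ℕ) : Prop := ∀ k < n, D (t + k) = D k

lemma occursD_E_one_iff (m j : ℕ) :
    OccursD (E m 1) j ↔ 1 ≤ j ∧ PrefixOccursAt (2 ^ m - 1) (j - 1) := by
  refine and_congr_right fun _ => ?_
  rw [length_E_one]
  exact forall₂_congr fun k hk => by rw [getD_E_one hk]

lemma prefixOccursAt_two_mul_iff (n s : ℕ) :
    PrefixOccursAt (2 * n + 1) (2 * s) ↔ PrefixOccursAt n s := by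
  constructor
  · intro h k hk
    have hk' := h (2 * k + 1) (by omega)
    rw [show 2 * s + (2 * k + 1) = 2 * (s + k) + 1 by ring, D_two_mul_add_one,
      D_two_mul_add_one] at hk'
    exact Bool.not_inj hk'
  · intro h k hk
    obtain ⟨j, rfl | rfl⟩ := Nat.even_or_odd' k
    · rw [← mul_add, D_two_mul, D_two_mul]
    · rw [show 2 * s + (2 * j + 1) = 2 * (s + j) + 1 by ring, D_two_mul_add_one,
        D_two_mul_add_one, h j (by omega)]

lemma not_prefixOccursAt_two_mul_add_one {n : ℕ} (hn : 2 ≤ n) (s : ℕ) :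
    ¬ PrefixOccursAt n (2 * s + 1) := fun h => by
  have h1 := h 1 (by omega)
  rw [show 2 * s + 1 + 1 = 2 * (s + 1) by ring, D_two_mul] at h1
  exact absurd h1 (by decide)

lemma prefixOccursAt_iff (n t : ℕ) :
    PrefixOccursAt (2 ^ (n + 1) - 1) t ↔ 2 ^ n ∣ t ∧ D (t / 2 ^ n) = false := by
  induction n generalizing t with
  | zero =>
    simp only [zero_add, pow_one, pow_zero, one_dvd, Nat.div_one, true_and]
    exact ⟨fun h => h 0 one_pos, fun h k hk => by obtain rfl : k = 0 := (by omega); exact h⟩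
  | succ n ih =>
    have hpos : 0 < 2 ^ n := Nat.two_pow_pos n
    obtain ⟨s, rfl | rfl⟩ := Nat.even_or_odd' t
    · rw [show 2 ^ (n + 2) - 1 = 2 * (2 ^ (n + 1) - 1) + 1 by rw [pow_succ]; omega,
        prefixOccursAt_two_mul_iff, ih, pow_succ', Nat.mul_dvd_mul_iff_left two_pos,
        Nat.mul_div_mul_left _ _ two_pos]
    · have hodd : ¬ 2 ^ (n + 1) ∣ 2 * s + 1 := fun h => by
        have := (dvd_pow_self 2 n.succ_ne_zero).trans h
        omega
      simp only [hodd, false_and, iff_false]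
      exact not_prefixOccursAt_two_mul_add_one (by rw [pow_succ, pow_succ]; omega) s

lemma occursD_E_one_two_pow_mul_add_one (n q : ℕ) :
    OccursD (E (n + 1) 1) (2 ^ n * q + 1) ↔ D q = false := by
  rw [occursD_E_one_iff, prefixOccursAt_iff, Nat.add_sub_cancel,
    Nat.mul_div_cancel_left _ (Nat.two_pow_pos n)]
  simp

lemma exists_eq_of_occursD_E_one {n j : ℕ} (h : OccursD (E (n + 1) 1) j) :
    ∃ q, 2 ^ n * q + 1 = j := by
  rw [occursD_E_one_iff, prefixOccursAt_iff] at h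
  obtain ⟨hj, ⟨q, hq⟩, -⟩ := h
  exact ⟨q, by omega⟩

lemma L_E_one (n i : ℕ) :
    L (E (n + 1) 1) (i + 1) = 2 ^ n * Nat.nth (fun q => D q = false) i + 1 := by
  have hmono : StrictMono fun q => 2 ^ n * q + 1 := fun a b hab => by
    dsimp only
    have := Nat.mul_lt_mul_of_pos_left hab (Nat.two_pow_pos n)
    omega
  have hinf : (Set.ofPred (OccursD (E (n + 1) 1))).Infinite := by
    refine Set.infinite_of_injective_forall_mem (f := fun q => 2 ^ n * (2 * q) + 1)
      (fun a b hab => by simpa using hab) fun q => ?_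
    exact (occursD_E_one_two_pow_mul_add_one n _).2 (D_two_mul q)
  rw [L, Nat.add_sub_cancel, ← Nat.nth_comp_of_strictMono hmono
    (fun j hj => exists_eq_of_occursD_E_one hj) fun hfin => absurd hfin hinf]
  simp only [occursD_E_one_two_pow_mul_add_one]

lemma nth_D_eq_false_zero : Nat.nth (fun q => D q = false) 0 = 0 :=
  Nat.nth_count (p := fun q => D q = false) (n := 0) rfl

lemma nth_D_eq_false_one : Nat.nth (fun q => D q = false) 1 = 2 :=
  Nat.nth_count (p := fun q => D q = false) (n := 2) rfl

lemma nth_D_eq_false_two : Nat.nth (fun q => D q = false) 2 = 3 :=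
  Nat.nth_count (p := fun q => D q = false) (n := 3) rfl

end PD

open PD
/-- For every `m ≥ 1`, the first three occurrences of `E m 1` in the doubling
sequence start at positions `1`, `2^m+1` and `3·2^(m-1)+1`. In particular the gap
between the first two occurrences is the single letter `δ_m` (the letter of `D∞`
at 1-indexed position `2^m`), and the second and third occurrences overlap in
`2^(m-1) − 1` letters. -/
theorem doubling_E1_first_three (m : ℕ) (hm : 1 ≤ m) :
    L (E m 1) 1 = 1 ∧ L (E m 1) 2 = 2 ^ m + 1 ∧ L (E m 1) 3 = 3 * 2 ^ (m - 1) + 1 ∧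
      D (2 ^ m - 1) = delta m ∧
      L (E m 1) 2 + (E m 1).length - L (E m 1) 3 = 2 ^ (m - 1) - 1 := by
  obtain ⟨n, rfl⟩ : ∃ n, m = n + 1 := ⟨m - 1, by omega⟩
  have h2 : 2 ^ (n + 1) = 2 * 2 ^ n := pow_succ' 2 n
  have hL1 := L_E_one n 0
  have hL2 := L_E_one n 1
  have hL3 := L_E_one n 2
  rw [nth_D_eq_false_zero] at hL1
  rw [nth_D_eq_false_one] at hL2
  rw [nth_D_eq_false_two] at hL3
  simp only [Nat.add_sub_cancel, zero_add, Nat.reduceAdd] at hL1 hL2 hL3 ⊢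
  refine ⟨by omega, by omega, by omega, D_two_pow_sub_one _, ?_⟩
  rw [hL2, hL3, length_E_one]
  omega
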